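/- Let a ≥ 1, b ≥ 1, q ≥ 0, and let {N_k}_{k ∈ {0,1,2,...}} ⊂ [1, ∞) be a sequence such that N_k ≤ a^k N_{k−1}^{2 + q·2^{−k}} + b^{2^k} for all k ≥ 1. Then liminf_{k→∞} N_k^{1/2^k} ≤ (2√2 · a³ · b^{1 + q/2} · N₀)^{e^{q/2}}. -/

import Mathlib

open Filter

set_option maxHeartbeats 1000000 in
/-- **Lemma 4.3** (Winkler). A recursive estimate for sequences: if `a, b ≥ 1`,
`q ≥ 0` and `N_k ≥ 1` satisfy `N_k ≤ a^k N_{k−1}^(2 + q 2^(−k)) + b^(2^k)` for all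
`k ≥ 1`, then `liminf_k N_k^(1/2^k) ≤ (2√2 a³ b^(1+q/2) N₀)^(e^(q/2))`. -/
theorem stmt_12
    (a b q : ℝ) (ha : 1 ≤ a) (hb : 1 ≤ b) (hq : 0 ≤ q)
    (N : ℕ → ℝ) (hN : ∀ k : ℕ, 1 ≤ N k)
    (hrec : ∀ k : ℕ, 1 ≤ k →
      N k ≤ a ^ k * N (k - 1) ^ (2 + q * (2 : ℝ) ^ (-(k : ℝ))) + b ^ (2 ^ k)) :
    Filter.liminf (fun k : ℕ => N k ^ ((1 : ℝ) / 2 ^ k)) Filter.atTop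
      ≤ (2 * Real.sqrt 2 * a ^ 3 * b ^ (1 + q / 2) * N 0) ^ Real.exp (q / 2) := by
  have ha0 : (0:ℝ) < a := lt_of_lt_of_le one_pos ha
  have hb0 : (0:ℝ) < b := lt_of_lt_of_le one_pos hb
  have hN0 : (1:ℝ) ≤ N 0 := hN 0
  have hs2 : (1:ℝ) ≤ Real.sqrt 2 := by
    rw [show (1:ℝ) = Real.sqrt 1 by simp]
    exact Real.sqrt_le_sqrt (by norm_num)
  have hs2' : 2 * Real.sqrt 2 = (2:ℝ) ^ (3/2 : ℝ) := by
    rw [show (3/2 : ℝ) = 1 + 1/2 by ring, Real.rpow_add two_pos, Real.rpow_one,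
      ← Real.sqrt_eq_rpow]
  have hbq : (1:ℝ) ≤ b ^ (1 + q/2) := Real.one_le_rpow hb (by linarith)
  have ha3 : (1:ℝ) ≤ a ^ 3 := one_le_pow₀ ha
  have ha3' : (a:ℝ) ^ 3 = a ^ ((3:ℕ):ℝ) := (Real.rpow_natCast a 3).symm
  set K := 2 * Real.sqrt 2 * a ^ 3 * b ^ (1 + q / 2) * N 0 with hKdef
  have hK1 : (1:ℝ) ≤ K := by
    have hA : (1:ℝ) ≤ 2 * Real.sqrt 2 * a ^ 3 := by nlinarith
    have hB : (1:ℝ) ≤ b ^ (1 + q/2) * N 0 := by nlinarith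
    have := mul_le_mul hA hB (by norm_num) (by positivity)
    rw [hKdef]; nlinarith [this]
  have hK0 : (0:ℝ) < K := lt_of_lt_of_le one_pos hK1
  -- the exponent sequence
  set L : ℕ → ℝ := fun k => ∏ j ∈ Finset.Icc 1 k, (2 + q * (2:ℝ) ^ (-(j:ℝ))) with hLdef
  have hfac : ∀ j : ℕ, 2 ≤ 2 + q * (2:ℝ) ^ (-(j:ℝ)) := by
    intro j
    have : 0 ≤ q * (2:ℝ) ^ (-(j:ℝ)) := mul_nonneg hq (Real.rpow_pos_of_pos two_pos _).le
    linarith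
  have hL0 : L 0 = 1 := by simp [hLdef]
  have hLsucc : ∀ m : ℕ, L (m+1) = L m * (2 + q * (2:ℝ) ^ (-((m+1:ℕ):ℝ))) := by
    intro m
    simp only [hLdef]
    exact Finset.prod_Icc_succ_top (Nat.succ_le_succ (Nat.zero_le m)) _
  have hLlb : ∀ k : ℕ, (2:ℝ) ^ k ≤ L k := by
    intro k
    induction k with
    | zero => simp [hL0]
    | succ m ih =>
      rw [hLsucc m, pow_succ]
      have h2m : (0:ℝ) < (2:ℝ)^m := by positivity
      exact mul_le_mul ih (hfac (m+1)) (by norm_num) (le_trans h2m.le ih)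
  have hLpos : ∀ k : ℕ, (0:ℝ) < L k := fun k => lt_of_lt_of_le (by positivity) (hLlb k)
  have hLub : ∀ k : ℕ, L k ≤ 2 ^ k * Real.exp (q/2 * (1 - (2:ℝ) ^ (-(k:ℝ)))) := by
    intro k
    induction k with
    | zero => simp [hL0]
    | succ m ih =>
      rw [hLsucc m]
      have h2 : (2:ℝ) ^ (-((m+1:ℕ):ℝ)) = (2:ℝ) ^ (-((m:ℕ):ℝ)) / 2 := by
        rw [show (-((m+1:ℕ):ℝ)) = -((m:ℕ):ℝ) + (-1) by push_cast; ring,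
          Real.rpow_add two_pos, Real.rpow_neg_one]
        ring
      have key : 2 + q * (2:ℝ) ^ (-((m+1:ℕ):ℝ)) ≤ 2 * Real.exp (q/2 * (2:ℝ) ^ (-((m:ℕ):ℝ)) / 2) := by
        have h1 : 1 + q * (2:ℝ) ^ (-((m+1:ℕ):ℝ)) / 2 ≤ Real.exp (q * (2:ℝ) ^ (-((m+1:ℕ):ℝ)) / 2) := by
          have := Real.add_one_le_exp (q * (2:ℝ) ^ (-((m+1:ℕ):ℝ)) / 2)
          linarith
        have h2' : q * (2:ℝ) ^ (-((m+1:ℕ):ℝ)) / 2 = q/2 * (2:ℝ) ^ (-((m:ℕ):ℝ)) / 2 := by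
          rw [h2]; ring
        rw [← h2']; linarith
      have hexp : Real.exp (q/2 * (1 - (2:ℝ) ^ (-((m+1:ℕ):ℝ))))
          = Real.exp (q/2 * (1 - (2:ℝ) ^ (-((m:ℕ):ℝ)))) * Real.exp (q/2 * (2:ℝ) ^ (-((m:ℕ):ℝ)) / 2) := by
        rw [← Real.exp_add]; congr 1; rw [h2]; ring
      calc L m * (2 + q * (2:ℝ) ^ (-((m+1:ℕ):ℝ)))
          ≤ (2 ^ m * Real.exp (q/2 * (1 - (2:ℝ) ^ (-(m:ℝ))))) *
            (2 * Real.exp (q/2 * (2:ℝ) ^ (-((m:ℕ):ℝ)) / 2)) := by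
            apply mul_le_mul ih key (by linarith [hfac (m+1)]) (by positivity)
        _ = 2 ^ (m+1) * Real.exp (q/2 * (1 - (2:ℝ) ^ (-((m+1:ℕ):ℝ)))) := by
            rw [hexp, pow_succ]; ring
  have hLub' : ∀ k : ℕ, L k ≤ 2 ^ k * Real.exp (q/2) := by
    intro k
    refine le_trans (hLub k) ?_
    have h1 : (0:ℝ) < (2:ℝ) ^ (-(k:ℝ)) := Real.rpow_pos_of_pos two_pos _
    have : q/2 * (1 - (2:ℝ) ^ (-(k:ℝ))) ≤ q/2 := by nlinarith
    have hmono := Real.exp_le_exp.mpr this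
    have h2 : (0:ℝ) < (2:ℝ)^k := by positivity
    nlinarith
  -- main pointwise bound
  have hmain : ∀ k : ℕ, N k ≤ K ^ (L k) * a ^ (-((k:ℝ) + 2)) * (2:ℝ) ^ (-((2:ℝ) ^ ((k:ℝ) - 1) + 1)) := by
    intro k
    induction k with
    | zero =>
      have e1 : K ^ (L 0) = K := by rw [hL0, Real.rpow_one]
      have e2 : ((0:ℕ):ℝ) + 2 = 2 := by norm_num
      have e3 : ((2:ℝ) ^ (((0:ℕ):ℝ) - 1) + 1) = 3/2 := by
        rw [show (((0:ℕ):ℝ) - 1) = -1 by norm_num, Real.rpow_neg_one]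
        norm_num
      rw [e1, e2, e3]
      have p1 : (2:ℝ)^(3/2:ℝ) * (2:ℝ)^(-(3/2):ℝ) = 1 := by
        rw [← Real.rpow_add two_pos]; norm_num
      have p2 : a^(((3:ℕ)):ℝ) * a^(-(2:ℝ)) = a := by
        rw [← Real.rpow_add ha0]; norm_num
      have heq : K * a ^ (-(2:ℝ)) * (2:ℝ) ^ (-(3/2 : ℝ)) = a * b ^ (1 + q/2) * N 0 := by
        calc K * a ^ (-(2:ℝ)) * (2:ℝ) ^ (-(3/2 : ℝ))
            = ((2:ℝ)^(3/2:ℝ) * (2:ℝ)^(-(3/2):ℝ)) * (a^(((3:ℕ)):ℝ) * a^(-(2:ℝ)))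
              * (b ^ (1 + q/2) * N 0) := by rw [hKdef, hs2', ha3']; ring
          _ = a * b ^ (1 + q/2) * N 0 := by rw [p1, p2]; ring
      rw [heq]
      have h1 : (1:ℝ) ≤ a * b^(1 + q/2) := by nlinarith
      have h2 := mul_le_mul h1 (le_refl (N 0)) (by linarith) (by linarith [hbq, ha])
      linarith [h2]
    | succ m ih =>
      have hrec' := hrec (m+1) (Nat.succ_le_succ (Nat.zero_le m))
      simp only [Nat.add_sub_cancel] at hrec'
      set e := 2 + q * (2:ℝ) ^ (-((m+1:ℕ):ℝ)) with hedef
      have he2 : 2 ≤ e := hfac (m+1)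
      have he0 : (0:ℝ) < e := by linarith
      set c := (2:ℝ) ^ ((m:ℝ) - 1) with hcdef
      have hc0 : (0:ℝ) < c := Real.rpow_pos_of_pos two_pos _
      set P := (2:ℝ) ^ m with hPdef
      have hP0 : (0:ℝ) < P := by positivity
      have hP1 : (1:ℝ) ≤ P := one_le_pow₀ (by norm_num)
      have hPc : P = 2 * c := by
        have hh1 : (2:ℝ) ^ ((1:ℝ) + ((m:ℝ) - 1)) = 2 * (2:ℝ) ^ ((m:ℝ) - 1) := by
          rw [Real.rpow_add two_pos, Real.rpow_one]
        rw [hPdef, hcdef, ← Real.rpow_natCast 2 m, ← hh1]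
        congr 1; ring
      have hL' := hLsucc m
      have hLP : 2 * P ≤ L (m+1) := by
        have := hLlb (m+1)
        rw [pow_succ] at this
        nlinarith [this]
      have hLpos' := hLpos (m+1)
      -- bound the recursion term
      have hNm : (0:ℝ) ≤ N m := by linarith [hN m]
      have h1 : N m ^ e ≤ (K ^ (L m) * a ^ (-((m:ℝ) + 2)) * (2:ℝ) ^ (-(c + 1))) ^ e :=
        Real.rpow_le_rpow hNm ih he0.le
      have hTe : (K ^ (L m) * a ^ (-((m:ℝ) + 2)) * (2:ℝ) ^ (-(c + 1))) ^ e
          ≤ K ^ (L (m+1)) * a ^ (-(2*((m:ℝ) + 2))) * (2:ℝ) ^ (-(2*(c + 1))) := by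
        rw [Real.mul_rpow (by positivity) (by positivity),
          Real.mul_rpow (by positivity) (by positivity)]
        have t1 : (K ^ (L m)) ^ e = K ^ (L (m+1)) := by
          rw [← Real.rpow_mul hK0.le, ← hL']
        have t2 : (a ^ (-((m:ℝ) + 2))) ^ e ≤ a ^ (-(2*((m:ℝ) + 2))) := by
          rw [← Real.rpow_mul ha0.le]
          apply Real.rpow_le_rpow_of_exponent_le ha
          have hm0 : (0:ℝ) ≤ (m:ℝ) + 2 := by positivity
          nlinarith
        have t3 : ((2:ℝ) ^ (-(c + 1))) ^ e ≤ (2:ℝ) ^ (-(2*(c + 1))) := by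
          rw [← Real.rpow_mul (by norm_num : (0:ℝ) ≤ 2)]
          apply Real.rpow_le_rpow_of_exponent_le (by norm_num)
          nlinarith
        rw [t1]
        have hp1 : (0:ℝ) < (a ^ (-((m:ℝ) + 2))) ^ e := Real.rpow_pos_of_pos (Real.rpow_pos_of_pos ha0 _) _
        have hp2 : (0:ℝ) < ((2:ℝ) ^ (-(c + 1))) ^ e := Real.rpow_pos_of_pos (Real.rpow_pos_of_pos two_pos _) _
        have hKL : (0:ℝ) < K ^ (L (m+1)) := Real.rpow_pos_of_pos hK0 _
        have hmul := mul_le_mul t2 t3 hp2.le (le_trans hp1.le t2)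
        calc K ^ (L (m+1)) * (a ^ (-((m:ℝ) + 2))) ^ e * ((2:ℝ) ^ (-(c + 1))) ^ e
            = K ^ (L (m+1)) * ((a ^ (-((m:ℝ) + 2))) ^ e * ((2:ℝ) ^ (-(c + 1))) ^ e) := by ring
          _ ≤ K ^ (L (m+1)) * (a ^ (-(2*((m:ℝ) + 2))) * (2:ℝ) ^ (-(2*(c + 1)))) :=
              mul_le_mul_of_nonneg_left hmul hKL.le
          _ = K ^ (L (m+1)) * a ^ (-(2*((m:ℝ) + 2))) * (2:ℝ) ^ (-(2*(c + 1))) := by ring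
      have h2 : a ^ (m+1) * N m ^ e ≤ K ^ (L (m+1)) * a ^ (-((m:ℝ) + 3)) * (2:ℝ) ^ (-(2*c + 2)) := by
        have ha' : (a:ℝ) ^ (m+1) = a ^ (((m+1:ℕ)):ℝ) := (Real.rpow_natCast a (m+1)).symm
        have step : a ^ (((m+1:ℕ)):ℝ) * (K ^ (L (m+1)) * a ^ (-(2*((m:ℝ) + 2))) * (2:ℝ) ^ (-(2*(c + 1))))
            = K ^ (L (m+1)) * a ^ (-((m:ℝ) + 3)) * (2:ℝ) ^ (-(2*c + 2)) := by
          have q1 : a ^ (((m+1:ℕ)):ℝ) * a ^ (-(2*((m:ℝ) + 2))) = a ^ (-((m:ℝ) + 3)) := by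
            rw [← Real.rpow_add ha0]; congr 1; push_cast; ring
          have q2 : (-(2*(c + 1))) = -(2*c + 2) := by ring
          calc a ^ (((m+1:ℕ)):ℝ) * (K ^ (L (m+1)) * a ^ (-(2*((m:ℝ) + 2))) * (2:ℝ) ^ (-(2*(c + 1))))
              = K ^ (L (m+1)) * (a ^ (((m+1:ℕ)):ℝ) * a ^ (-(2*((m:ℝ) + 2)))) * (2:ℝ) ^ (-(2*(c + 1))) := by
                ring
            _ = K ^ (L (m+1)) * a ^ (-((m:ℝ) + 3)) * (2:ℝ) ^ (-(2*c + 2)) := by rw [q1, q2]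
        rw [ha', ← step]
        have hap : (0:ℝ) < a ^ (((m+1:ℕ)):ℝ) := Real.rpow_pos_of_pos ha0 _
        exact mul_le_mul_of_nonneg_left (le_trans h1 hTe) hap.le
      -- bound on the b term
      have hkey : b ^ (2^(m+1)) ≤ K ^ (L (m+1)) * a ^ (-((m:ℝ) + 3)) * (2:ℝ) ^ (-(2*c + 2)) := by
        set Lk := L (m+1) with hLkdef
        have hKexp : K ^ Lk = (2*Real.sqrt 2) ^ Lk * (a^3) ^ Lk * (b ^ (1 + q/2)) ^ Lk * (N 0) ^ Lk := by
          rw [hKdef, Real.mul_rpow (by positivity) (by linarith),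
            Real.mul_rpow (by positivity) (by positivity),
            Real.mul_rpow (by positivity) (by positivity)]
        have f1 : (2:ℝ) ^ ((3/2) * Lk) = (2*Real.sqrt 2) ^ Lk := by
          rw [hs2', ← Real.rpow_mul (by norm_num : (0:ℝ) ≤ 2)]
        have f2 : a ^ (3 * Lk) = (a^3) ^ Lk := by
          rw [ha3', ← Real.rpow_mul ha0.le]; norm_num
        have f3 : b ^ ((1 + q/2) * Lk) = (b ^ (1 + q/2)) ^ Lk := by
          rw [← Real.rpow_mul hb0.le]
        have f4 : (1:ℝ) ≤ (N 0) ^ Lk := Real.one_le_rpow hN0 (hLpos (m+1)).le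
        -- b^(2^(m+1)) as rpow
        have hbr : (b:ℝ) ^ (2^(m+1) : ℕ) = b ^ (2 * P) := by
          rw [← Real.rpow_natCast b (2^(m+1))]
          congr 1
          rw [hPdef]; push_cast; ring
        -- exponent comparisons
        have c1 : b ^ (2 * P) ≤ b ^ ((1 + q/2) * Lk) :=
          Real.rpow_le_rpow_of_exponent_le hb (by nlinarith)
        have hm2P : (m:ℝ) + 2 ≤ 2 * P := by
          have h0 : m + 2 ≤ 2^(m+1) := Nat.succ_le_of_lt (Nat.lt_two_pow_self (n := m+1))
          have h1 : ((m:ℝ)) + 2 ≤ ((2^(m+1) : ℕ):ℝ) := by exact_mod_cast h0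
          have hc : ((2^(m+1):ℕ):ℝ) = 2 * P := by rw [hPdef]; push_cast; ring
          linarith [hc ▸ h1]
        have c2 : a ^ ((m:ℝ) + 3) ≤ a ^ (3 * Lk) :=
          Real.rpow_le_rpow_of_exponent_le ha (by nlinarith)
        have c3 : (2:ℝ) ^ (2*c + 2) ≤ (2:ℝ) ^ ((3/2) * Lk) :=
          Real.rpow_le_rpow_of_exponent_le (by norm_num) (by nlinarith [hPc])
        -- combine
        have hprod : b ^ (2 * P) * a ^ ((m:ℝ) + 3) * (2:ℝ) ^ (2*c + 2) ≤ K ^ Lk := by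
          rw [hKexp, ← f1, ← f2, ← f3]
          have hpos1 : (0:ℝ) < a ^ ((m:ℝ)+3) := Real.rpow_pos_of_pos ha0 _
          have hpos2 : (0:ℝ) < (2:ℝ) ^ (2*c+2) := Real.rpow_pos_of_pos two_pos _
          have hpos3 : (0:ℝ) < b ^ ((1+q/2)*Lk) := Real.rpow_pos_of_pos hb0 _
          have hpos4 : (0:ℝ) < a ^ (3*Lk) := Real.rpow_pos_of_pos ha0 _
          have hpos5 : (0:ℝ) < (2:ℝ) ^ ((3/2)*Lk) := Real.rpow_pos_of_pos two_pos _
          calc b ^ (2 * P) * a ^ ((m:ℝ) + 3) * (2:ℝ) ^ (2*c + 2)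
              ≤ b ^ ((1+q/2)*Lk) * a ^ (3*Lk) * (2:ℝ) ^ ((3/2)*Lk) := by
                have hb2P : (0:ℝ) < b ^ (2*P) := Real.rpow_pos_of_pos hb0 _
                exact mul_le_mul (mul_le_mul c1 c2 hpos1.le (Real.rpow_pos_of_pos hb0 _).le) c3
                  hpos2.le (mul_pos hpos3 hpos4).le
            _ ≤ (b ^ ((1+q/2)*Lk) * a ^ (3*Lk) * (2:ℝ) ^ ((3/2)*Lk)) * (N 0) ^ Lk :=
                le_mul_of_one_le_right (mul_pos (mul_pos hpos3 hpos4) hpos5).le f4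
            _ = (2:ℝ) ^ ((3/2)*Lk) * a ^ (3*Lk) * b ^ ((1+q/2)*Lk) * (N 0) ^ Lk := by ring
        -- rearrange
        have hrw : K ^ Lk * a ^ (-((m:ℝ) + 3)) * (2:ℝ) ^ (-(2*c + 2))
            = K ^ Lk / (a ^ ((m:ℝ) + 3) * (2:ℝ) ^ (2*c + 2)) := by
          rw [Real.rpow_neg ha0.le, Real.rpow_neg (by norm_num : (0:ℝ) ≤ 2)]
          field_simp
        have hpos1 : (0:ℝ) < a ^ ((m:ℝ)+3) := Real.rpow_pos_of_pos ha0 _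
        have hpos2 : (0:ℝ) < (2:ℝ) ^ (2*c+2) := Real.rpow_pos_of_pos two_pos _
        rw [hbr, hrw, le_div_iff₀ (mul_pos hpos1 hpos2)]
        calc b ^ (2*P) * (a ^ ((m:ℝ)+3) * (2:ℝ) ^ (2*c+2))
            = b ^ (2*P) * a ^ ((m:ℝ)+3) * (2:ℝ) ^ (2*c+2) := by ring
          _ ≤ K ^ Lk := hprod
      -- assemble
      have hgoal2 : -((2:ℝ) ^ ((((m+1:ℕ)):ℝ) - 1) + 1) = -(2*c + 1) := by
        have : (2:ℝ) ^ ((((m+1:ℕ)):ℝ) - 1) = 2 * c := by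
          rw [hcdef, show ((((m+1:ℕ)):ℝ) - 1) = ((m:ℝ) - 1) + 1 by push_cast; ring,
            Real.rpow_add two_pos, Real.rpow_one]
          ring
        rw [this]
      have hgoal1 : -((((m+1:ℕ)):ℝ) + 2) = -((m:ℝ) + 3) := by push_cast; ring
      rw [hgoal1, hgoal2]
      have hhalf : (2:ℝ) ^ (-(2*c + 1)) = 2 * (2:ℝ) ^ (-(2*c + 2)) := by
        rw [show -(2*c+1) = 1 + -(2*c+2) by ring, Real.rpow_add two_pos, Real.rpow_one]
      calc N (m+1) ≤ a ^ (m+1) * N m ^ e + b ^ (2^(m+1)) := hrec'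
        _ ≤ (K ^ (L (m+1)) * a ^ (-((m:ℝ) + 3)) * (2:ℝ) ^ (-(2*c + 2)))
            + (K ^ (L (m+1)) * a ^ (-((m:ℝ) + 3)) * (2:ℝ) ^ (-(2*c + 2))) := add_le_add h2 hkey
        _ = K ^ (L (m+1)) * a ^ (-((m:ℝ) + 3)) * (2:ℝ) ^ (-(2*c + 1)) := by rw [hhalf]; ring
  -- uniform bound on N k ^ (1/2^k)
  have hconst : ∀ k : ℕ, N k ^ ((1:ℝ)/2^k) ≤ K ^ Real.exp (q/2) := by
    intro k
    have hA : a ^ (-((k:ℝ) + 2)) ≤ 1 :=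
      Real.rpow_le_one_of_one_le_of_nonpos ha (neg_nonpos.mpr (by positivity))
    have hB : (2:ℝ) ^ (-((2:ℝ) ^ ((k:ℝ) - 1) + 1)) ≤ 1 :=
      Real.rpow_le_one_of_one_le_of_nonpos (by norm_num)
        (neg_nonpos.mpr (by positivity))
    have hKL : (0:ℝ) < K ^ (L k) := Real.rpow_pos_of_pos hK0 _
    have hApos : (0:ℝ) < a ^ (-((k:ℝ) + 2)) := Real.rpow_pos_of_pos ha0 _
    have hBpos : (0:ℝ) < (2:ℝ) ^ (-((2:ℝ) ^ ((k:ℝ) - 1) + 1)) := Real.rpow_pos_of_pos two_pos _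
    have h1 : N k ≤ K ^ (L k) := by
      refine le_trans (hmain k) ?_
      calc K ^ (L k) * a ^ (-((k:ℝ) + 2)) * (2:ℝ) ^ (-((2:ℝ) ^ ((k:ℝ) - 1) + 1))
          ≤ K ^ (L k) * a ^ (-((k:ℝ) + 2)) * 1 :=
            mul_le_mul_of_nonneg_left hB (mul_pos hKL hApos).le
        _ = K ^ (L k) * a ^ (-((k:ℝ) + 2)) := by ring
        _ ≤ K ^ (L k) * 1 := mul_le_mul_of_nonneg_left hA hKL.le
        _ = K ^ (L k) := by ring
    have h2 : N k ^ ((1:ℝ)/2^k) ≤ (K ^ (L k)) ^ ((1:ℝ)/2^k) :=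
      Real.rpow_le_rpow (by linarith [hN k]) h1 (by positivity)
    have h3 : (K ^ (L k)) ^ ((1:ℝ)/2^k) = K ^ (L k * ((1:ℝ)/2^k)) :=
      (Real.rpow_mul hK0.le _ _).symm
    have h4 : L k * ((1:ℝ)/2^k) ≤ Real.exp (q/2) := by
      have h2k : (0:ℝ) < 2^k := by positivity
      rw [mul_one_div, div_le_iff₀ h2k]
      calc L k ≤ 2 ^ k * Real.exp (q/2) := hLub' k
        _ = Real.exp (q/2) * 2 ^ k := by ring
    exact le_trans h2 (by rw [h3]; exact Real.rpow_le_rpow_of_exponent_le hK1 h4)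
  refine Filter.liminf_le_of_frequently_le (Frequently.of_forall hconst) ?_
  exact isBoundedUnder_of ⟨0, fun k => Real.rpow_nonneg (by linarith [hN k]) _⟩
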